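/- If the Star STS instance is a YES instance, then the constructed parallel token swapping instance has a K-round solution, where K = 8n. -/

import Mathlib

namespace ParallelTS

/-!
Construction (parallel): given a Star STS instance with slots `1,…,m` (encoded as
`Fin m`), items `0,…,m` (encoded as `Option (Fin m)`, `none` = item 0), target
permutation `π` and swap sequence `s₁,…,sₙ` (`s : Fin n → Fin m`), set `K = 8n` and
build a subdivided star with root `r` and branches: swap branches `w¹,…,wⁿ`, slot
branches `s¹,…,s^{m+n}` and garbage branches `g`, `g′`, each a path of `K` vertices.
-/

/-- The branches: swap branches `wᵗ` (`Sum.inl`), slot branches `sⁱ`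
(`Sum.inr (Sum.inl _)`), and the garbage branches `g = Sum.inr (Sum.inr false)` and
`g′ = Sum.inr (Sum.inr true)`. -/
abbrev Branch (m n : ℕ) := Fin n ⊕ Fin (m + n) ⊕ Bool

/-- Vertices of the subdivided star: `none` is the root `r`; `some (b, j)` is the
vertex `b_{j+1}` of branch `b` at distance `j+1` from the root.  (The coordinate `j`
ranges over all of `ℕ`; the graph below only has edges between the root and the first
`K` vertices of each branch, so the remaining vertices are isolated and carry no
tokens.) -/
abbrev PV (m n : ℕ) := Option (Branch m n × ℕ)

/-- Adjacency generator for the subdivided star with branches of length `K = 8n`. -/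
def prel {m n : ℕ} : PV m n → PV m n → Prop
  | none, some (_, j) => j = 0 ∧ 0 < 8 * n
  | some (b, j), some (b', j') => b = b' ∧ j' = j + 1 ∧ j' < 8 * n
  | _, _ => False

/-- The subdivided star, as a simple graph. -/
def PGraph (m n : ℕ) : SimpleGraph (PV m n) := SimpleGraph.fromRel prel

/-- Swap the two values `e.1`, `e.2`. -/
def swapV {V : Type*} [DecidableEq V] (e : V × V) (v : V) : V :=
  if v = e.1 then e.2 else if v = e.2 then e.1 else v

/-- Trajectory of the vertex `v` under a schedule of rounds, each round being a list
of (disjoint) swaps. -/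
def applySched {V : Type*} [DecidableEq V] (sched : List (List (V × V))) (v : V) : V :=
  sched.foldl (fun v R => R.foldl (fun v e => swapV e v) v) v

/-- Two swaps do not share a vertex. -/
def NoShare {V : Type*} (e f : V × V) : Prop :=
  e.1 ≠ f.1 ∧ e.1 ≠ f.2 ∧ e.2 ≠ f.1 ∧ e.2 ≠ f.2

/-- Apply a sequence of star swaps (each given by a leaf) to a placement on the star
with center `none` and leaves `some l`. -/
def starApply {L : Type*} [DecidableEq L] (σ : List L) (f : Option L → Option L) :
    Option L → Option L :=
  σ.foldl (fun g l => fun t => swapV ((none : Option L), some l) (g t)) f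

/-- The Star STS instance is a YES instance. -/
def StarSTSYes {L : Type*} [DecidableEq L] (π : Equiv.Perm (Option L)) (σ : List L) : Prop :=
  ∃ σ' : List L, σ'.Sublist σ ∧ starApply σ' id = ⇑π

variable {m n : ℕ}

/-- `a(i,t)`: the index of the slot branch representing slot `i` after `t` steps:
`a(i,0) = i`, and `a(i,t) = a(i,t-1)` for `i ≠ s_t` while `a(s_t,t) = m + t`
(`1`-indexed; below everything is `0`-indexed). -/
def aFun (s : Fin n → Fin m) : ℕ → Fin m → Fin (m + n)
  | 0, i => ⟨i.val, Nat.lt_of_lt_of_le i.isLt (Nat.le_add_right m n)⟩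
  | t + 1, i =>
      if h : t < n then
        (if s ⟨t, h⟩ = i then ⟨m + t, Nat.add_lt_add_left h m⟩ else aFun s t i)
      else aFun s t i

/-- The enforcement tokens are indexed by `(t, r) : Fin n × Fin 4`; the token
`e_{(t,r)}` is `e_d` for the odd number `d = 8t + 2r + 1`. -/
def dOf (t : Fin n) (r : Fin 4) : ℕ := 8 * t.val + 2 * r.val + 1

/-- The starting branch `x^d` of enforcement token `e_d`, `d = 8t+2r+1`:
`x^{8T-7} = x^{8T-5} = w^T`, `x^{8T-3} = g′`, `x^{8T-1} = s^{m+T}` (where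
`T = t+1`). -/
def xB (s : Fin n → Fin m) (t : Fin n) (r : Fin 4) : Branch m n :=
  if r.val ≤ 1 then Sum.inl t
  else if r.val = 2 then Sum.inr (Sum.inr true)
  else Sum.inr (Sum.inl ⟨m + t.val, Nat.add_lt_add_left t.isLt m⟩)

/-- The destination branch `y^d` of enforcement token `e_d`, `d = 8t+2r+1`:
`y^{8T-7} = s^{a(s_T, T-1)}`, `y^{8T-5} = g`, `y^{8T-3} = y^{8T-1} = w^T` (where
`T = t+1`). -/
def yB (s : Fin n → Fin m) (t : Fin n) (r : Fin 4) : Branch m n :=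
  if r.val = 0 then Sum.inr (Sum.inl (aFun s t.val (s t)))
  else if r.val = 1 then Sum.inr (Sum.inr false)
  else Sum.inl t

/-- Initial vertex of item token `o`: the root for item `0`, the vertex `sⁱ₁` for
item `i`. -/
def itemInit (s : Fin n → Fin m) : Option (Fin m) → PV m n
  | none => none
  | some i => some (Sum.inr (Sum.inl (aFun s 0 i)), 0)

/-- Initial vertex of the enforcement token `e_d`, namely `x^d_d`. -/
def enfInit (s : Fin n → Fin m) (t : Fin n) (r : Fin 4) : PV m n :=
  some (xB s t r, dOf t r - 1)

/-- A vertex initially occupied by an item or enforcement token. -/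
def Occupied (s : Fin n → Fin m) (v : PV m n) : Prop :=
  (∃ o : Option (Fin m), itemInit s o = v) ∨
    (∃ tr : Fin n × Fin 4, enfInit s tr.1 tr.2 = v)

/-- The tokens of the parallel instance: item tokens, enforcement tokens, and one
filler token for each initially unoccupied vertex. -/
abbrev PTok (s : Fin n → Fin m) :=
  Option (Fin m) ⊕ (Fin n × Fin 4) ⊕ {v : PV m n // ¬ Occupied s v}

/-- Initial placement of all tokens. -/
def initP (s : Fin n → Fin m) : PTok s → PV m n
  | Sum.inl o => itemInit s o
  | Sum.inr (Sum.inl (t, r)) => enfInit s t r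
  | Sum.inr (Sum.inr v) => v.val

/-- Position of the enforcement token with branches `xb`, `yb` and starting distance
`d` after `τ` rounds of the scaffold solution: it moves one step toward its target in
every round, reaching the root after round `d`. -/
def posE (xb yb : Branch m n) (d τ : ℕ) : PV m n :=
  if τ < d then some (xb, d - τ - 1)
  else if τ = d then none
  else some (yb, τ - d - 1)

/-- The scaffold solution: the `K = 8n`-round schedule whose round `τ+1` swaps each
enforcement token one step along the path toward its target. -/
def scaffold (s : Fin n → Fin m) : List (List (PV m n × PV m n)) :=
  List.ofFn fun τ : Fin (8 * n) =>
    (List.ofFn fun t : Fin n =>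
      List.ofFn fun r : Fin 4 =>
        (posE (xB s t r) (yB s t r) (dOf t r) τ.val,
          posE (xB s t r) (yB s t r) (dOf t r) (τ.val + 1))).flatten

/-- Target placement of all tokens: item token `o` goes to the root if `π o = 0` and
to `s^{a(π o, n)}₁` otherwise; enforcement token `e_d` goes to `y^d_{K-d}`; each
filler token goes to the final vertex of its initial vertex under the scaffold
solution. -/
def tgtP (s : Fin n → Fin m) (π : Equiv.Perm (Option (Fin m))) : PTok s → PV m n
  | Sum.inl o =>
      (match π o with
        | none => none
        | some i => some (Sum.inr (Sum.inl (aFun s n i)), 0))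
  | Sum.inr (Sum.inl (t, r)) => some (yB s t r, 8 * n - dOf t r - 1)
  | Sum.inr (Sum.inr v) => applySched (scaffold s) v.val

/-- `sched` is a solution of the parallel token swapping instance using at most `K`
rounds: at most `K` rounds, every round is a matching of edges of the graph, and the
schedule brings every token from its initial vertex to its target vertex. -/
def IsSolution (s : Fin n → Fin m) (π : Equiv.Perm (Option (Fin m)))
    (K : ℕ) (sched : List (List (PV m n × PV m n))) : Prop :=
  sched.length ≤ K ∧
  (∀ R ∈ sched, (∀ e ∈ R, (PGraph m n).Adj e.1 e.2) ∧ R.Pairwise NoShare) ∧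
  ∀ t : PTok s, applySched sched (initP s t) = tgtP s π t

end ParallelTS

namespace ParallelTS

/-!
Every swap of the scaffold solution moves an enforcement token one step, so any other token it
meets is pushed one step back along that token's path. Tracing this through block `t` (rounds
`8t, …, 8t+7`, counted from `0`): the item at the root and the item in slot branch `a(s_t, t)`
are parked at distances `2` and `1` of the swap branch `w^t` after round `8t+3`; afterwards the
first returns to the root and the second moves on to the fresh slot branch `a(s_t, t+1)`. Adding
the swap of these two vertices to round `8t+3` exchanges their roles, which is exactly the star
swap `s_t`.

A swap of the positions of two tokens appended to a round has the same effect as exchanging the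
two tokens before the schedule starts. Hence adding these swaps for the blocks of an increasing
index list `l` moves the item tokens by the star permutation of `l.map s` followed by the
scaffold, and every other token exactly as the scaffold does.
-/

section SwapSchedules

variable {V : Type*} [DecidableEq V]

theorem swapV_eq_swap (e : V × V) : swapV e = Equiv.swap e.1 e.2 := by
  funext v
  rw [swapV, Equiv.swap_apply_def]

def applyRound (R : List (V × V)) (v : V) : V :=
  R.foldl (fun v e => swapV e v) v

theorem applySched_append (S₁ S₂ : List (List (V × V))) (v : V) :
    applySched (S₁ ++ S₂) v = applySched S₂ (applySched S₁ v) :=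
  List.foldl_append

theorem applySched_cons (R : List (V × V)) (S : List (List (V × V))) (v : V) :
    applySched (R :: S) v = applySched S (applyRound R v) :=
  rfl

theorem applySched_singleton (R : List (V × V)) (v : V) :
    applySched [R] v = applyRound R v :=
  rfl

theorem applyRound_append_singleton (R : List (V × V)) (e : V × V) (v : V) :
    applyRound (R ++ [e]) v = swapV e (applyRound R v) := by
  simp [applyRound]

theorem applyRound_injective (R : List (V × V)) : Function.Injective (applyRound R) := by
  induction R with
  | nil => exact fun _ _ h => h
  | cons e R ih =>
    have he : Function.Injective (swapV e) := by
      rw [swapV_eq_swap]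
      exact (Equiv.swap e.1 e.2).injective
    exact fun _ _ h => he (ih h)

theorem applySched_injective (S : List (List (V × V))) : Function.Injective (applySched S) := by
  induction S with
  | nil => exact fun _ _ h => h
  | cons R S ih => exact fun _ _ h => applyRound_injective R (ih h)

theorem applyRound_of_forall_ne {R : List (V × V)} {v : V} (h : ∀ e ∈ R, v ≠ e.1 ∧ v ≠ e.2) :
    applyRound R v = v := by
  induction R with
  | nil => rfl
  | cons f R ih =>
    obtain ⟨h₁, h₂⟩ := h f List.mem_cons_self
    simp only [applyRound, List.foldl_cons, swapV, if_neg h₁, if_neg h₂]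
    exact ih fun e he => h e (List.mem_cons_of_mem f he)

theorem applyRound_of_mem {R : List (V × V)} (hR : R.Pairwise NoShare) {e : V × V} (he : e ∈ R)
    {v : V} (hv : v = e.1 ∨ v = e.2) : applyRound R v = swapV e v := by
  induction R with
  | nil => simp at he
  | cons f R ih =>
    rw [List.pairwise_cons] at hR
    simp only [applyRound, List.foldl_cons]
    rcases List.mem_cons.1 he with rfl | he
    · apply applyRound_of_forall_ne
      intro g hg
      obtain ⟨h₁, h₂, h₃, h₄⟩ := hR.1 g hg
      rw [swapV_eq_swap]
      rcases hv with rfl | rfl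
      · rw [Equiv.swap_apply_left]; exact ⟨h₃, h₄⟩
      · rw [Equiv.swap_apply_right]; exact ⟨h₁, h₂⟩
    · obtain ⟨h₁, h₂, h₃, h₄⟩ := hR.1 e he
      have hf : v ≠ f.1 ∧ v ≠ f.2 := by
        rcases hv with rfl | rfl
        exacts [⟨Ne.symm h₁, Ne.symm h₃⟩, ⟨Ne.symm h₂, Ne.symm h₄⟩]
      rw [swapV_eq_swap, Equiv.swap_apply_of_ne_of_ne hf.1 hf.2]
      exact ih hR.2 he

theorem applyRound_fst {R : List (V × V)} (hR : R.Pairwise NoShare) {e : V × V} (he : e ∈ R) :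
    applyRound R e.1 = e.2 := by
  rw [applyRound_of_mem hR he (Or.inl rfl), swapV_eq_swap, Equiv.swap_apply_left]

theorem applyRound_snd {R : List (V × V)} (hR : R.Pairwise NoShare) {e : V × V} (he : e ∈ R) :
    applyRound R e.2 = e.1 := by
  rw [applyRound_of_mem hR he (Or.inr rfl), swapV_eq_swap, Equiv.swap_apply_right]

theorem applySched_set_append_swap {S : List (List (V × V))} {i : ℕ} (hi : i < S.length)
    (u u' : V) :
    applySched (S.set i (S[i] ++
        [(applySched (S.take (i + 1)) u, applySched (S.take (i + 1)) u')])) =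
      applySched S ∘ Equiv.swap u u' := by
  have hS : S = S.take i ++ S[i] :: S.drop (i + 1) := by
    rw [← List.set_eq_take_cons_drop _ hi, List.set_getElem_self]
  have hP : ∀ v, applySched (S.take (i + 1)) v = applyRound S[i] (applySched (S.take i) v) := by
    intro v
    rw [← List.take_append_getElem hi, applySched_append, applySched_singleton]
  funext v
  conv_rhs => rw [Function.comp_apply, hS]
  rw [List.set_eq_take_cons_drop _ hi, applySched_append, applySched_cons, applySched_append,
    applySched_cons, applyRound_append_singleton, ← hP, swapV_eq_swap,
    ← (applySched_injective _).map_swap, hP]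

end SwapSchedules

theorem starApply_apply {L : Type*} [DecidableEq L] (σ : List L) (f : Option L → Option L)
    (o : Option L) : starApply σ f o = starApply σ id (f o) := by
  induction σ generalizing f o with
  | nil => rfl
  | cons l σ ih => exact (ih _ o).trans (ih _ (f o)).symm

theorem starApply_cons_id {L : Type*} [DecidableEq L] (x : L) (σ : List L) (o : Option L) :
    starApply (x :: σ) id o = starApply σ id (Equiv.swap none (some x) o) :=
  (starApply_apply σ _ o).trans (by simp [swapV_eq_swap])

section Construction

variable {m n : ℕ}

theorem aFun_lt (s : Fin n → Fin m) (t : ℕ) (i : Fin m) : (aFun s t i : ℕ) < m + t := by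
  induction t with
  | zero => exact i.isLt
  | succ t ih =>
    simp only [aFun]
    split_ifs
    · simp
    all_goals omega

theorem aFun_injective (s : Fin n → Fin m) (t : ℕ) : Function.Injective (aFun s t) := by
  induction t with
  | zero => intro i j h; simpa [aFun, Fin.ext_iff] using h
  | succ t ih =>
    intro i j h
    have hi := aFun_lt s t i
    have hj := aFun_lt s t j
    simp only [aFun] at h
    split_ifs at h with _ hsi hsj hsj <;> simp only [Fin.ext_iff] at h
    · exact hsi.symm.trans hsj
    all_goals first | omega | exact ih (Fin.ext h)

theorem aFun_succ_self (s : Fin n → Fin m) (t : Fin n) :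
    aFun s (t + 1) (s t) = ⟨m + t, Nat.add_lt_add_left t.isLt m⟩ := by
  simp [aFun]

theorem aFun_succ_of_ne (s : Fin n → Fin m) (t : Fin n) {i : Fin m} (hi : i ≠ s t) :
    aFun s (t + 1) i = aFun s t i := by
  simp [aFun, Ne.symm hi]

theorem posE_eq_none_iff {xb yb : Branch m n} {d τ : ℕ} : posE xb yb d τ = none ↔ τ = d := by
  unfold posE
  split_ifs <;> simp <;> omega

theorem posE_eq_some_iff {xb yb β : Branch m n} {d τ j : ℕ} :
    posE xb yb d τ = some (β, j) ↔ (τ + j + 1 = d ∧ xb = β) ∨ (d + j + 1 = τ ∧ yb = β) := by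
  unfold posE
  split_ifs <;> grind

theorem posE_adj {xb yb : Branch m n} {d τ : ℕ} (hd : d ≤ 8 * n) (hτ : τ < 8 * n) :
    (PGraph m n).Adj (posE xb yb d τ) (posE xb yb d (τ + 1)) := by
  unfold posE
  split_ifs <;> simp [PGraph, prel] <;> omega

variable (s : Fin n → Fin m)

def enfPos (t : Fin n) (r : Fin 4) (τ : ℕ) : PV m n :=
  posE (xB s t r) (yB s t r) (dOf t r) τ

def scaffoldRound (τ : ℕ) : List (PV m n × PV m n) :=
  (List.ofFn fun t : Fin n => List.ofFn fun r : Fin 4 =>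
    (enfPos s t r τ, enfPos s t r (τ + 1))).flatten

theorem length_scaffold : (scaffold s).length = 8 * n :=
  List.length_ofFn

theorem getElem_scaffold {τ : ℕ} (hτ : τ < (scaffold s).length) :
    (scaffold s)[τ] = scaffoldRound s τ :=
  List.getElem_ofFn _

theorem mem_scaffoldRound {τ : ℕ} {e : PV m n × PV m n} :
    e ∈ scaffoldRound s τ ↔ ∃ t r, (enfPos s t r τ, enfPos s t r (τ + 1)) = e := by
  rw [scaffoldRound, List.mem_flatten]
  constructor
  · rintro ⟨l, hl, he⟩
    obtain ⟨t, rfl⟩ := List.mem_ofFn.1 hl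
    obtain ⟨r, rfl⟩ := List.mem_ofFn.1 he
    exact ⟨t, r, rfl⟩
  · rintro ⟨t, r, rfl⟩
    exact ⟨_, List.mem_ofFn.2 ⟨t, rfl⟩, List.mem_ofFn.2 ⟨r, rfl⟩⟩

theorem dOf_lt (t : Fin n) (r : Fin 4) : dOf t r < 8 * n := by
  have := t.isLt; have := r.isLt; unfold dOf; omega

theorem dOf_lt_of_xB_eq_yB {t t' : Fin n} {r r' : Fin 4} (h : xB s t r = yB s t' r') :
    dOf t r < dOf t' r' := by
  have := aFun_lt s t' (s t')
  unfold xB yB at h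
  fin_cases r <;> fin_cases r' <;> simp [Fin.ext_iff] at h <;> simp [dOf] <;> omega

theorem enfPos_ne {t t' : Fin n} {r r' : Fin 4} (hne : (t, r) ≠ (t', r')) {σ σ' : ℕ}
    (h₁ : σ ≤ σ' + 1) (h₂ : σ' ≤ σ + 1) : enfPos s t r σ ≠ enfPos s t' r' σ' := by
  have hd : dOf t r + 2 ≤ dOf t' r' ∨ dOf t' r' + 2 ≤ dOf t r := by
    simp only [ne_eq, Prod.mk.injEq, Fin.ext_iff] at hne
    have := r.isLt; have := r'.isLt; unfold dOf; omega
  intro h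
  rcases hp : enfPos s t r σ with _ | ⟨β, j⟩
  · rw [hp, eq_comm] at h
    rw [enfPos, posE_eq_none_iff] at hp h
    omega
  · rw [hp, eq_comm] at h
    rw [enfPos, posE_eq_some_iff] at hp h
    rcases hp with ⟨hp, hb⟩ | ⟨hp, hb⟩ <;> rcases h with ⟨h, hb'⟩ | ⟨h, hb'⟩
    · omega
    · have := dOf_lt_of_xB_eq_yB s (hb.trans hb'.symm); omega
    · have := dOf_lt_of_xB_eq_yB s (hb'.trans hb.symm); omega
    · omega

theorem enfPos_adj (t : Fin n) (r : Fin 4) {τ : ℕ} (hτ : τ < 8 * n) :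
    (PGraph m n).Adj (enfPos s t r τ) (enfPos s t r (τ + 1)) :=
  posE_adj (dOf_lt t r).le hτ

theorem scaffoldRound_pairwise (τ : ℕ) : (scaffoldRound s τ).Pairwise NoShare := by
  have key : ∀ {t t' : Fin n} {r r' : Fin 4}, (t, r) ≠ (t', r') →
      NoShare (enfPos s t r τ, enfPos s t r (τ + 1)) (enfPos s t' r' τ, enfPos s t' r' (τ + 1)) :=
    fun h => ⟨enfPos_ne s h (by omega) (by omega), enfPos_ne s h (by omega) (by omega),
      enfPos_ne s h (by omega) (by omega), enfPos_ne s h (by omega) (by omega)⟩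
  rw [scaffoldRound, List.pairwise_flatten, List.pairwise_ofFn]
  refine ⟨?_, fun t t' htt' x hx y hy => ?_⟩
  · simp only [List.mem_ofFn]
    rintro _ ⟨t, rfl⟩
    rw [List.pairwise_ofFn]
    exact fun r r' hrr' => key (by simp [hrr'.ne])
  · simp only [List.mem_ofFn] at hx hy
    obtain ⟨r, rfl⟩ := hx
    obtain ⟨r', rfl⟩ := hy
    exact key (by simp [htt'.ne])

end Construction

section Scaffold

variable {m n : ℕ} (s : Fin n → Fin m)

def scaffoldPos (τ : ℕ) (v : PV m n) : PV m n :=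
  applySched ((scaffold s).take τ) v

theorem scaffoldPos_zero (v : PV m n) : scaffoldPos s 0 v = v :=
  rfl

theorem scaffoldPos_succ {τ : ℕ} (hτ : τ < 8 * n) (v : PV m n) :
    scaffoldPos s (τ + 1) v = applyRound (scaffoldRound s τ) (scaffoldPos s τ v) := by
  rw [scaffoldPos, scaffoldPos, ← List.take_append_getElem (by rwa [length_scaffold]),
    applySched_append, applySched_singleton, getElem_scaffold]

theorem applySched_scaffold (v : PV m n) : applySched (scaffold s) v = scaffoldPos s (8 * n) v := by
  rw [scaffoldPos, ← length_scaffold s, List.take_length]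

theorem scaffoldPos_enfInit (t : Fin n) (r : Fin 4) {τ : ℕ} (hτ : τ ≤ 8 * n) :
    scaffoldPos s τ (enfInit s t r) = enfPos s t r τ := by
  induction τ with
  | zero => simp [scaffoldPos_zero, enfInit, enfPos, posE, dOf]
  | succ τ ih =>
    rw [scaffoldPos_succ s (by omega), ih (by omega)]
    exact applyRound_fst (scaffoldRound_pairwise s τ) ((mem_scaffoldRound s).2 ⟨t, r, rfl⟩)

theorem scaffoldPos_succ_of_eq {τ : ℕ} (hτ : τ < 8 * n) {v p q : PV m n} {t : Fin n} {r : Fin 4}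
    (hp : enfPos s t r (τ + 1) = p) (hq : enfPos s t r τ = q) (h : scaffoldPos s τ v = p) :
    scaffoldPos s (τ + 1) v = q := by
  rw [scaffoldPos_succ s hτ, h, ← hp, ← hq]
  exact applyRound_snd (scaffoldRound_pairwise s τ) ((mem_scaffoldRound s).2 ⟨t, r, rfl⟩)

def Unvisited (p : PV m n) (τ₁ τ₂ : ℕ) : Prop :=
  ∀ σ, τ₁ ≤ σ → σ ≤ τ₂ → ∀ t r, enfPos s t r σ ≠ p

theorem scaffoldPos_of_unvisited {p : PV m n} {τ₁ τ₂ : ℕ} (hp : Unvisited s p τ₁ τ₂)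
    (h₁₂ : τ₁ ≤ τ₂) (h₂ : τ₂ ≤ 8 * n) {v : PV m n} (h : scaffoldPos s τ₁ v = p) :
    scaffoldPos s τ₂ v = p := by
  induction τ₂, h₁₂ using Nat.le_induction with
  | base => exact h
  | succ τ hτ ih =>
    rw [scaffoldPos_succ s (by omega), ih (fun σ h₁ h₂ => hp σ h₁ (by omega)) (by omega)]
    apply applyRound_of_forall_ne
    intro e he
    obtain ⟨t, r, rfl⟩ := (mem_scaffoldRound s).1 he
    exact ⟨(hp τ hτ (by omega) t r).symm, (hp (τ + 1) (by omega) le_rfl t r).symm⟩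

theorem unvisited_swapBranch (t : Fin n) {j τ₁ τ₂ : ℕ} (h₁ : 8 * t + 3 ≤ τ₁ + j)
    (h₂ : τ₂ ≤ 8 * t + 5 + j) : Unvisited s (some (Sum.inl t, j)) τ₁ τ₂ := by
  intro σ hσ₁ hσ₂ t' r h
  rw [enfPos, posE_eq_some_iff] at h
  unfold xB yB at h
  fin_cases r <;> simp [dOf, Fin.ext_iff] at h <;> omega

theorem unvisited_slot_of_mod {q : Fin (m + n)} {τ₁ τ₂ : ℕ}
    (h : ∀ σ, τ₁ ≤ σ → σ ≤ τ₂ → σ % 4 ≠ 2) :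
    Unvisited s (some (Sum.inr (Sum.inl q), 0)) τ₁ τ₂ := by
  intro σ hσ₁ hσ₂ t r hσ
  have := h σ hσ₁ hσ₂
  rw [enfPos, posE_eq_some_iff] at hσ
  unfold xB yB at hσ
  fin_cases r <;> simp [dOf] at hσ <;> omega

theorem unvisited_slot_aFun (t : Fin n) {i : Fin m} (hi : i ≠ s t) :
    Unvisited s (some (Sum.inr (Sum.inl (aFun s t i)), 0)) (8 * t) (8 * t + 8) := by
  intro σ hσ₁ hσ₂ t' r hσ
  have := aFun_lt s t i
  rw [enfPos, posE_eq_some_iff] at hσ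
  unfold xB yB at hσ
  fin_cases r <;> simp [dOf, Fin.ext_iff] at hσ
  · obtain ⟨hσ, hq⟩ := hσ
    obtain rfl : t = t' := Fin.ext (by omega)
    exact hi (aFun_injective s t (Fin.ext hq)).symm
  · omega

end Scaffold

section Items

variable {m n : ℕ} (s : Fin n → Fin m)

def restPos (k : ℕ) : Option (Fin m) → PV m n
  | none => none
  | some i => some (Sum.inr (Sum.inl (aFun s k i)), 0)

theorem itemInit_eq_restPos_zero : itemInit s = restPos s 0 := by
  funext o; cases o <;> rfl

theorem scaffoldPos_root_block (t : Fin n) {v : PV m n} (h : scaffoldPos s (8 * t) v = none) :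
    scaffoldPos s (8 * t + 4) v = some (Sum.inl t, 1) ∧ scaffoldPos s (8 * t + 8) v = none := by
  have := t.isLt
  have h₁ : scaffoldPos s (8 * t + 1) v = some (Sum.inl t, 0) :=
    scaffoldPos_succ_of_eq s (t := t) (r := 0) (by omega)
      (by simp [enfPos, posE_eq_none_iff, dOf]) (by simp [enfPos, posE_eq_some_iff, dOf, xB]) h
  have h₂ : scaffoldPos s (8 * t + 2) v = some (Sum.inl t, 1) :=
    scaffoldPos_succ_of_eq s (t := t) (r := 1) (by omega)
      (by simp [enfPos, posE_eq_some_iff, dOf, xB]) (by simp [enfPos, posE_eq_some_iff, dOf, xB]) h₁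
  have h₄ := scaffoldPos_of_unvisited s
    (unvisited_swapBranch s t (τ₁ := 8 * t + 2) (τ₂ := 8 * t + 4) le_rfl (by omega))
    (by omega) (by omega) h₂
  have h₆ := scaffoldPos_of_unvisited s
    (unvisited_swapBranch s t (τ₁ := 8 * t + 4) (τ₂ := 8 * t + 6) (by omega) (by omega))
    (by omega) (by omega) h₄
  have h₇ : scaffoldPos s (8 * t + 7) v = some (Sum.inl t, 0) :=
    scaffoldPos_succ_of_eq s (t := t) (r := 2) (by omega)
      (by simp [enfPos, posE_eq_some_iff, dOf, yB]) (by simp [enfPos, posE_eq_some_iff, dOf, yB]) h₆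
  exact ⟨h₄, scaffoldPos_succ_of_eq s (t := t) (r := 3) (by omega)
    (by simp [enfPos, posE_eq_some_iff, dOf, yB]) (by simp [enfPos, posE_eq_none_iff, dOf]) h₇⟩

theorem scaffoldPos_active_block (t : Fin n) {v : PV m n}
    (h : scaffoldPos s (8 * t) v = some (Sum.inr (Sum.inl (aFun s t (s t))), 0)) :
    scaffoldPos s (8 * t + 4) v = some (Sum.inl t, 0) ∧
      scaffoldPos s (8 * t + 8) v = restPos s (t + 1) (some (s t)) := by
  have := t.isLt
  have h₁ := scaffoldPos_of_unvisited s
    (unvisited_slot_of_mod s (τ₁ := 8 * t) (τ₂ := 8 * t + 1) (by omega)) (by omega) (by omega) h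
  have h₂ : scaffoldPos s (8 * t + 2) v = none :=
    scaffoldPos_succ_of_eq s (t := t) (r := 0) (by omega)
      (by simp [enfPos, posE_eq_some_iff, dOf, yB]) (by simp [enfPos, posE_eq_none_iff, dOf]) h₁
  have h₃ : scaffoldPos s (8 * t + 3) v = some (Sum.inl t, 0) :=
    scaffoldPos_succ_of_eq s (t := t) (r := 1) (by omega)
      (by simp [enfPos, posE_eq_none_iff, dOf]) (by simp [enfPos, posE_eq_some_iff, dOf, xB]) h₂
  have h₄ := scaffoldPos_of_unvisited s
    (unvisited_swapBranch s t (τ₁ := 8 * t + 3) (τ₂ := 8 * t + 4) le_rfl (by omega))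
    (by omega) (by omega) h₃
  have h₅ := scaffoldPos_of_unvisited s
    (unvisited_swapBranch s t (τ₁ := 8 * t + 4) (τ₂ := 8 * t + 5) (by omega) (by omega))
    (by omega) (by omega) h₄
  have h₆ : scaffoldPos s (8 * t + 6) v = none :=
    scaffoldPos_succ_of_eq s (t := t) (r := 2) (by omega)
      (by simp [enfPos, posE_eq_some_iff, dOf, yB]) (by simp [enfPos, posE_eq_none_iff, dOf]) h₅
  have h₇ : scaffoldPos s (8 * t + 7) v = restPos s (t + 1) (some (s t)) := by
    rw [restPos, aFun_succ_self]
    exact scaffoldPos_succ_of_eq s (t := t) (r := 3) (by omega)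
      (by simp [enfPos, posE_eq_none_iff, dOf]) (by simp [enfPos, posE_eq_some_iff, dOf, xB]) h₆
  exact ⟨h₄, scaffoldPos_of_unvisited s
    (unvisited_slot_of_mod s (τ₁ := 8 * t + 7) (τ₂ := 8 * t + 8) (by omega)) (by omega) (by omega)
    h₇⟩

theorem scaffoldPos_passive_block (t : Fin n) {i : Fin m} (hi : i ≠ s t) {v : PV m n}
    (h : scaffoldPos s (8 * t) v = restPos s t (some i)) :
    scaffoldPos s (8 * t + 8) v = restPos s (t + 1) (some i) := by
  rw [restPos, aFun_succ_of_ne s t hi]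
  have := t.isLt
  exact scaffoldPos_of_unvisited s (unvisited_slot_aFun s t hi) (by omega) (by omega) h

theorem scaffoldPos_itemInit {k : ℕ} (hk : k ≤ n) (o : Option (Fin m)) :
    scaffoldPos s (8 * k) (itemInit s o) = restPos s k o := by
  induction k with
  | zero => rw [itemInit_eq_restPos_zero]; rfl
  | succ k ih =>
    have ih := ih (by omega)
    let t : Fin n := ⟨k, by omega⟩
    rw [Nat.mul_succ]
    rcases o with _ | i
    · exact (scaffoldPos_root_block s t ih).2
    · by_cases hi : i = s t
      · subst hi
        exact (scaffoldPos_active_block s t ih).2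
      · exact scaffoldPos_passive_block s t hi ih

theorem scaffoldPos_itemInit_block (t : Fin n) :
    scaffoldPos s (8 * t + 4) (itemInit s (some (s t))) = some (Sum.inl t, 0) ∧
      scaffoldPos s (8 * t + 4) (itemInit s none) = some (Sum.inl t, 1) :=
  ⟨(scaffoldPos_active_block s t (scaffoldPos_itemInit s t.isLt.le _)).1,
    (scaffoldPos_root_block s t (scaffoldPos_itemInit s t.isLt.le _)).1⟩

end Items

section Solution

variable {m n : ℕ} (s : Fin n → Fin m)

theorem itemInit_injective : Function.Injective (itemInit s) := by
  rintro (_ | i) (_ | j) h <;> simp [itemInit] at h ⊢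
  exact aFun_injective s 0 h

theorem itemInit_ne_enfInit (o : Option (Fin m)) (t : Fin n) (r : Fin 4) :
    itemInit s o ≠ enfInit s t r := by
  rcases o with _ | i
  · simp [itemInit, enfInit]
  · have := i.isLt
    unfold itemInit enfInit xB
    fin_cases r <;> simp [aFun, Fin.ext_iff]
    omega

def blockSwap (t : Fin n) : PV m n × PV m n :=
  (some (Sum.inl t, 0), some (Sum.inl t, 1))

def solution : List (Fin n) → List (List (PV m n × PV m n))
  | [] => scaffold s
  | t :: l => (solution l).set (8 * t + 3) (scaffoldRound s (8 * t + 3) ++ [blockSwap t])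

theorem length_solution (l : List (Fin n)) : (solution s l).length = 8 * n := by
  induction l with
  | nil => exact length_scaffold s
  | cons t l ih => rw [solution, List.length_set, ih]

theorem take_solution {k : ℕ} {l : List (Fin n)} (hl : ∀ t ∈ l, k ≤ 8 * t + 3) :
    (solution s l).take k = (scaffold s).take k := by
  induction l with
  | nil => rfl
  | cons t l ih =>
    have := hl t List.mem_cons_self
    rw [solution, List.take_set, ih fun t' ht' => hl t' (List.mem_cons_of_mem t ht'),
      List.set_eq_of_length_le (by simp; omega)]

theorem applySched_solution {l : List (Fin n)} (hl : l.Pairwise (· < ·)) :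
    (∀ o, applySched (solution s l) (itemInit s o) =
        applySched (scaffold s) (itemInit s (starApply (l.map s) id o))) ∧
      ∀ v, (∀ o, itemInit s o ≠ v) → applySched (solution s l) v = applySched (scaffold s) v := by
  induction l with
  | nil => exact ⟨fun _ => rfl, fun _ _ => rfl⟩
  | cons t l ih =>
    rw [List.pairwise_cons] at hl
    obtain ⟨ih_items, ih_others⟩ := ih hl.2
    have hlt : 8 * (t : ℕ) + 3 < (solution s l).length := by
      rw [length_solution]; have := t.isLt; omega
    have htake : (solution s l).take (8 * t + 3 + 1) = (scaffold s).take (8 * t + 4) :=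
      take_solution s fun t' ht' => by have := hl.1 t' ht'; rw [Fin.lt_def] at this; omega
    have hround : (solution s l)[8 * (t : ℕ) + 3] = scaffoldRound s (8 * t + 3) := by
      rw [← getElem_scaffold s (by rw [length_scaffold]; have := t.isLt; omega),
        ← List.getElem_take (j := 8 * t + 3 + 1), List.getElem_of_eq htake, List.getElem_take]
      simp [hlt]
    have hswap : blockSwap t =
        (applySched ((solution s l).take (8 * t + 3 + 1)) (itemInit s (some (s t))),
          applySched ((solution s l).take (8 * t + 3 + 1)) (itemInit s none)) := by
      rw [htake, ← scaffoldPos, ← scaffoldPos, (scaffoldPos_itemInit_block s t).1,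
        (scaffoldPos_itemInit_block s t).2, blockSwap]
    have key : applySched (solution s (t :: l)) =
        applySched (solution s l) ∘ Equiv.swap (itemInit s (some (s t))) (itemInit s none) := by
      rw [solution, ← hround, hswap]
      exact applySched_set_append_swap hlt _ _
    refine ⟨fun o => ?_, fun v hv => ?_⟩
    · rw [key, Function.comp_apply, ← (itemInit_injective s).map_swap, ih_items, List.map_cons,
        starApply_cons_id, Equiv.swap_comm]
    · rw [key, Function.comp_apply, Equiv.swap_apply_of_ne_of_ne (hv _).symm (hv _).symm,
        ih_others v hv]

def IsMatchingRound (R : List (PV m n × PV m n)) : Prop :=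
  (∀ e ∈ R, (PGraph m n).Adj e.1 e.2) ∧ R.Pairwise NoShare

theorem isMatchingRound_scaffoldRound {τ : ℕ} (hτ : τ < 8 * n) :
    IsMatchingRound (scaffoldRound s τ) := by
  refine ⟨fun e he => ?_, scaffoldRound_pairwise s τ⟩
  obtain ⟨t, r, rfl⟩ := (mem_scaffoldRound s).1 he
  exact enfPos_adj s t r hτ

theorem isMatchingRound_blockRound (t : Fin n) :
    IsMatchingRound (scaffoldRound s (8 * t + 3) ++ [blockSwap t]) := by
  have := t.isLt
  obtain ⟨hadj, hpw⟩ := isMatchingRound_scaffoldRound s (τ := 8 * t + 3) (by omega)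
  have h₀ := unvisited_swapBranch s t (j := 0) (τ₁ := 8 * t + 3) (τ₂ := 8 * t + 4) le_rfl (by omega)
  have h₁ := unvisited_swapBranch s t (j := 1) (τ₁ := 8 * t + 3) (τ₂ := 8 * t + 4) (by omega)
    (by omega)
  refine ⟨fun e he => ?_, List.pairwise_append.2 ⟨hpw, List.pairwise_singleton _ _, ?_⟩⟩
  · rcases List.mem_append.1 he with he | he
    · exact hadj e he
    · rw [List.mem_singleton.1 he]
      simp [blockSwap, PGraph, prel]
      omega
  · intro e he f hf
    obtain ⟨t', r, rfl⟩ := (mem_scaffoldRound s).1 he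
    rw [List.mem_singleton.1 hf]
    exact ⟨h₀ _ le_rfl (by omega) t' r, h₁ _ le_rfl (by omega) t' r,
      h₀ _ (by omega) le_rfl t' r, h₁ _ (by omega) le_rfl t' r⟩

theorem isMatchingRound_of_mem_solution (l : List (Fin n)) {R : List (PV m n × PV m n)}
    (hR : R ∈ solution s l) : IsMatchingRound R := by
  induction l with
  | nil =>
    obtain ⟨τ, rfl⟩ := List.mem_ofFn.1 hR
    exact isMatchingRound_scaffoldRound s τ.isLt
  | cons t l ih =>
    rcases List.mem_or_eq_of_mem_set hR with hR | rfl
    exacts [ih hR, isMatchingRound_blockRound s t]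

end Solution

theorem starSTS_yes_implies_parallel_solution {m n : ℕ}
    (s : Fin n → Fin m) (π : Equiv.Perm (Option (Fin m)))
    (hyes : StarSTSYes π (List.ofFn s)) :
    ∃ sched : List (List (PV m n × PV m n)), IsSolution s π (8 * n) sched := by
  obtain ⟨σ', hsub, hπ⟩ := hyes
  rw [List.ofFn_eq_map, List.sublist_map_iff] at hsub
  obtain ⟨l, hl, rfl⟩ := hsub
  obtain ⟨hitems, hothers⟩ := applySched_solution s ((List.pairwise_lt_finRange n).sublist hl)
  refine ⟨solution s l, (length_solution s l).le,
    fun R hR => isMatchingRound_of_mem_solution s l hR, ?_⟩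
  rintro (o | ⟨t, r⟩ | ⟨v, hv⟩)
  · rw [initP, hitems, hπ, applySched_scaffold, scaffoldPos_itemInit s le_rfl, tgtP]
    rcases π o with _ | i <;> rfl
  · rw [initP, hothers _ fun o => itemInit_ne_enfInit s o t r, applySched_scaffold,
      scaffoldPos_enfInit s t r le_rfl, tgtP, enfPos, posE_eq_some_iff]
    exact Or.inr ⟨by have := dOf_lt t r; omega, rfl⟩
  · exact hothers v fun o ho => hv (Or.inl ⟨o, ho⟩)

end ParallelTS
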